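/- Let ε > 0 and p ≥ 1. On ℝ², define the probability measures μ^ε = (1/2)δ_{(ε, 1)} + (1/2)δ_{(−ε, −1)} and μ = (1/2)δ_{(0, 1)} + (1/2)δ_{(0, −1)}. Then: (a) the only bicausal coupling between μ and μ^ε is the product coupling μ ⊗ μ^ε; and (b) consequently the adapted Wasserstein distance satisfies AW_p^p(μ^ε, μ) = inf over bicausal couplings π of ∫ (|x₁ − y₁|^p + |x₂ − y₂|^p) dπ = ε^p + 2^{p−1}. In particular AW_p^p(μ^ε, μ) > 2^{p−1} for every ε > 0, even though the (non-adapted) p-Wasserstein distance between μ^ε and μ tends to 0 as ε → 0. -/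

import Mathlib

open MeasureTheory
open scoped ENNReal

noncomputable section

/-- Conditional independence of the σ-algebras `m₁` and `m₂` given `m'`, under `π`:
the conditional expectation of the product of indicators factorizes. -/
def CondIndepGiven {X : Type*} [mX : MeasurableSpace X] (m' m₁ m₂ : MeasurableSpace X)
    (π : @MeasureTheory.Measure X mX) : Prop :=
  ∀ s t : Set X, MeasurableSet[m₁] s → MeasurableSet[m₂] t →
    MeasureTheory.condExp m' π ((s ∩ t).indicator fun _ => (1 : ℝ)) =ᵐ[π]
      fun ω => MeasureTheory.condExp m' π (s.indicator fun _ => (1 : ℝ)) ω *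
        MeasureTheory.condExp m' π (t.indicator fun _ => (1 : ℝ)) ω

/-- A coupling `π` on `(ℝ×ℝ) × (ℝ×ℝ)` (two two-step processes) is bicausal: given
`σ(x₁)`, `σ(y₁)` is conditionally independent of `σ(x₁,x₂)`, and symmetrically with the
roles of `x` and `y` exchanged. -/
def IsBicausal2 (π : Measure ((ℝ × ℝ) × (ℝ × ℝ))) : Prop :=
  CondIndepGiven (X := (ℝ × ℝ) × (ℝ × ℝ)) (MeasurableSpace.comap (fun q => q.1.1) inferInstance)
    (MeasurableSpace.comap (fun q => q.2.1) inferInstance)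
    (MeasurableSpace.comap Prod.fst inferInstance) π ∧
  CondIndepGiven (X := (ℝ × ℝ) × (ℝ × ℝ)) (MeasurableSpace.comap (fun q => q.2.1) inferInstance)
    (MeasurableSpace.comap (fun q => q.1.1) inferInstance)
    (MeasurableSpace.comap Prod.snd inferInstance) π

/-- The martingale `μ = (1/2)δ_{(0,1)} + (1/2)δ_{(0,-1)}`. -/
def muMart : Measure (ℝ × ℝ) :=
  (1 / 2 : ℝ≥0∞) • Measure.dirac (0, 1) + (1 / 2 : ℝ≥0∞) • Measure.dirac (0, -1)

/-- The deterministic process `μ^ε = (1/2)δ_{(ε,1)} + (1/2)δ_{(-ε,-1)}`. -/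
def muEps (ε : ℝ) : Measure (ℝ × ℝ) :=
  (1 / 2 : ℝ≥0∞) • Measure.dirac (ε, 1) + (1 / 2 : ℝ≥0∞) • Measure.dirac (-ε, -1)

/-! Under `μ` the first coordinate `x₁` is almost surely `0`, so `σ(x₁)` is trivial and
conditioning on it does nothing: causality of `π` says that `y₁` is independent of the whole
path `x`. Under `μ^ε` the whole path `y` is a function of `y₁` (namely `y₂ = y₁ / ε`), so `y` is
independent of `x` and `π = μ ⊗ μ^ε`; conversely the product is bicausal. Hence the adapted cost
is that of the product, `ε^p + 2^(p-1)`, while the plain coupling `(0, ±1) ↦ (±ε, ±1)` costs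
only `ε^p`. -/

open ProbabilityTheory Filter

section TrivialConditioning

variable {X : Type*} {m' m₁ m₂ : MeasurableSpace X} [mX : MeasurableSpace X]
  {π : Measure X} [IsProbabilityMeasure π]

lemma indicator_one_ae_eq_measureReal {s : Set X} (hs : MeasurableSet s)
    (h : π s = 0 ∨ π s = 1) : s.indicator (fun _ => (1 : ℝ)) =ᵐ[π] fun _ => π.real s := by
  rcases h with h | h
  · filter_upwards [measure_eq_zero_iff_ae_notMem.1 h] with x hx
    simp [hx, measureReal_def, h]
  · filter_upwards [(mem_ae_iff_prob_eq_one hs).2 h] with x hx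
    simp [hx, measureReal_def, h]

lemma condExp_ae_eq_integral_of_trivial (hm : m' ≤ mX)
    (htriv : ∀ s, MeasurableSet[m'] s → π s = 0 ∨ π s = 1) {f : X → ℝ} (hf : Integrable f π) :
    π[f | m'] =ᵐ[π] fun _ => ∫ x, f x ∂π := by
  refine (ae_eq_condExp_of_forall_setIntegral_eq hm hf (fun _ _ _ => integrableOn_const)
    ?_ stronglyMeasurable_const.aestronglyMeasurable).symm
  intro s hs _
  rcases htriv s hs with h | h
  · simp [setIntegral_measure_zero _ h]
  · simp [Measure.restrict_eq_self_of_ae_mem ((mem_ae_iff_prob_eq_one (hm s hs)).2 h)]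

lemma condExp_indicator_ae_eq_measureReal_of_trivial (hm : m' ≤ mX)
    (htriv : ∀ s, MeasurableSet[m'] s → π s = 0 ∨ π s = 1) {s : Set X} (hs : MeasurableSet s) :
    π[s.indicator (fun _ => (1 : ℝ)) | m'] =ᵐ[π] fun _ => π.real s := by
  simpa [integral_indicator hs] using
    condExp_ae_eq_integral_of_trivial hm htriv ((integrable_const (1 : ℝ)).indicator hs)

lemma condIndepGiven_iff_indep_of_trivial (hm : m' ≤ mX) (hm₁ : m₁ ≤ mX) (hm₂ : m₂ ≤ mX)
    (htriv : ∀ s, MeasurableSet[m'] s → π s = 0 ∨ π s = 1) :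
    CondIndepGiven m' m₁ m₂ π ↔ Indep m₁ m₂ π := by
  rw [Indep_iff]
  refine forall₄_congr fun s t hs ht => ?_
  have E {u : Set X} (hu : MeasurableSet u) :=
    condExp_indicator_ae_eq_measureReal_of_trivial hm htriv hu
  rw [(E ((hm₁ s hs).inter (hm₂ t ht))).congr_left,
    EventuallyEq.congr_right (g := fun ω => π[s.indicator (fun _ => (1 : ℝ)) | m'] ω *
      π[t.indicator (fun _ => (1 : ℝ)) | m'] ω) ((E (hm₁ s hs)).mul (E (hm₂ t ht)))]
  simp only [EventuallyEq, Pi.mul_apply, eventually_const, measureReal_def, ← ENNReal.toReal_mul]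
  exact ENNReal.toReal_eq_toReal_iff' (measure_ne_top _ _) (by finiteness)

lemma condIndepGiven_of_trivial_left (hm : m' ≤ mX) (hm₁ : m₁ ≤ mX)
    (htriv : ∀ s, MeasurableSet[m₁] s → π s = 0 ∨ π s = 1) : CondIndepGiven m' m₁ m₂ π := by
  intro s t hs ht
  have hs1 := indicator_one_ae_eq_measureReal (hm₁ s hs) (htriv s hs)
  have hinter : (s ∩ t).indicator (fun _ => (1 : ℝ)) =ᵐ[π]
      π.real s • t.indicator fun _ => 1 := by
    filter_upwards [hs1] with x hx
    rw [Pi.smul_apply, ← hx]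
    by_cases x ∈ s <;> by_cases x ∈ t <;> simp [*]
  have hcs : π[s.indicator (fun _ => (1 : ℝ)) | m'] =ᵐ[π] fun _ => π.real s :=
    (condExp_congr_ae hs1).trans (condExp_const hm _).eventuallyEq
  calc π[(s ∩ t).indicator (fun _ => (1 : ℝ)) | m']
      _ =ᵐ[π] π[π.real s • t.indicator (fun _ => (1 : ℝ)) | m'] := condExp_congr_ae hinter
      _ =ᵐ[π] π.real s • π[t.indicator (fun _ => (1 : ℝ)) | m'] := condExp_smul _ _ _
      _ =ᵐ[π] _ := by
        filter_upwards [hcs] with ω hω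
        simp [hω]

lemma measure_eq_zero_or_one_of_ae_eq_const {Y : Type*} [mY : MeasurableSpace Y] {f : X → Y}
    {c : Y} (hf : ∀ᵐ x ∂π, f x = c) (s : Set X) (hs : MeasurableSet[mY.comap f] s) :
    π s = 0 ∨ π s = 1 := by
  obtain ⟨A, -, rfl⟩ := hs
  by_cases hc : c ∈ A
  · right
    have : f ⁻¹' A =ᵐ[π] Set.univ := eventuallyEq_set.2 (hf.mono fun x hx => by simp [hx, hc])
    exact (measure_congr this).trans measure_univ
  · left
    have : f ⁻¹' A =ᵐ[π] (∅ : Set X) := eventuallyEq_set.2 (hf.mono fun x hx => by simp [hx, hc])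
    exact (measure_congr this).trans measure_empty

end TrivialConditioning

section TwoPoint

variable {α β : Type*} [MeasurableSpace α] [MeasurableSpace β]

def twoPoint (a b : α) : Measure α :=
  (1 / 2 : ℝ≥0∞) • Measure.dirac a + (1 / 2 : ℝ≥0∞) • Measure.dirac b

instance (a b : α) : IsProbabilityMeasure (twoPoint a b) :=
  ⟨by simp [twoPoint, ENNReal.inv_two_add_inv_two]⟩

lemma map_twoPoint {f : α → β} (hf : Measurable f) (a b : α) :
    (twoPoint a b).map f = twoPoint (f a) (f b) := by
  simp [twoPoint, Measure.map_add _ _ hf, Measure.map_smul, Measure.map_dirac' hf]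

variable [MeasurableSingletonClass α]

lemma ae_twoPoint_iff {P : α → Prop} {a b : α} : (∀ᵐ x ∂twoPoint a b, P x) ↔ P a ∧ P b := by
  simp [twoPoint, ae_dirac_eq]

lemma integrable_twoPoint (f : α → ℝ) (a b : α) : Integrable f (twoPoint a b) :=
  ((integrable_dirac enorm_lt_top).smul_measure (by simp)).add_measure
    ((integrable_dirac enorm_lt_top).smul_measure (by simp))

lemma integral_twoPoint (f : α → ℝ) (a b : α) : ∫ x, f x ∂twoPoint a b = (f a + f b) / 2 := by
  rw [twoPoint, integral_add_measure ((integrable_dirac enorm_lt_top).smul_measure (by simp))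
    ((integrable_dirac enorm_lt_top).smul_measure (by simp))]
  simp [integral_smul_measure]
  ring

omit [MeasurableSingletonClass α] in
lemma twoPoint_prod_twoPoint (a b : α) (c d : β) :
    (twoPoint a b).prod (twoPoint c d) =
      (1 / 2 : ℝ≥0∞) • twoPoint (a, c) (a, d) + (1 / 2 : ℝ≥0∞) • twoPoint (b, c) (b, d) := by
  rw [twoPoint, Measure.add_prod, Measure.prod_smul_left, Measure.prod_smul_left,
    Measure.dirac_prod, Measure.dirac_prod, map_twoPoint measurable_prodMk_left,
    map_twoPoint measurable_prodMk_left]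

lemma integral_twoPoint_prod_twoPoint [MeasurableSingletonClass β] (F : α × β → ℝ)
    (a b : α) (c d : β) :
    ∫ x, F x ∂(twoPoint a b).prod (twoPoint c d) =
      (F (a, c) + F (a, d) + F (b, c) + F (b, d)) / 4 := by
  rw [twoPoint_prod_twoPoint,
    integral_add_measure ((integrable_twoPoint F _ _).smul_measure (by simp))
      ((integrable_twoPoint F _ _).smul_measure (by simp))]
  simp [integral_smul_measure, integral_twoPoint]
  ring

end TwoPoint

section Bicausal

variable {π : Measure ((ℝ × ℝ) × (ℝ × ℝ))} [IsProbabilityMeasure π] {c : ℝ}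

lemma IsBicausal2.eq_map_fst_prod_map_snd (hx₁ : ∀ᵐ q ∂π, q.1.1 = c) {g : ℝ → ℝ × ℝ}
    (hg : Measurable g) (hy : ∀ᵐ q ∂π, q.2 = g q.2.1) (h : IsBicausal2 π) :
    π = (π.map Prod.fst).prod (π.map Prod.snd) := by
  have hy₁ : (fun q => q.2.1) ⟂ᵢ[π] Prod.fst :=
    (IndepFun_iff_Indep _ _ _).2 <| (condIndepGiven_iff_indep_of_trivial
      measurable_fst.fst.comap_le measurable_snd.fst.comap_le measurable_fst.comap_le
      (measure_eq_zero_or_one_of_ae_eq_const hx₁)).1 h.1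
  have hindep : Prod.fst ⟂ᵢ[π] Prod.snd :=
    (hy₁.comp hg measurable_id).symm.congr (ae_eq_refl _) (hy.mono fun _ hq => hq.symm)
  simpa using (indepFun_iff_map_prod_eq_prod_map_map measurable_fst.aemeasurable
    measurable_snd.aemeasurable).1 hindep

lemma isBicausal2_prod (μ ν : Measure (ℝ × ℝ)) [IsProbabilityMeasure μ] [IsProbabilityMeasure ν]
    (hx₁ : ∀ᵐ x ∂μ, x.1 = c) : IsBicausal2 (μ.prod ν) := by
  have htriv := measure_eq_zero_or_one_of_ae_eq_const (f := fun q : (ℝ × ℝ) × (ℝ × ℝ) => q.1.1)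
    ((measurePreserving_fst (μ := μ) (ν := ν)).quasiMeasurePreserving.ae hx₁)
  refine ⟨(condIndepGiven_iff_indep_of_trivial measurable_fst.fst.comap_le
    measurable_snd.fst.comap_le measurable_fst.comap_le htriv).2 ?_,
    condIndepGiven_of_trivial_left measurable_snd.fst.comap_le measurable_fst.fst.comap_le htriv⟩
  exact (IndepFun_iff_Indep _ _ _).1
    (indepFun_prod (μ := μ) (ν := ν) measurable_id measurable_fst).symm

end Bicausal

lemma muMart_eq_twoPoint : muMart = twoPoint (0, 1) (0, -1) := rfl

lemma muEps_eq_twoPoint (ε : ℝ) : muEps ε = twoPoint (ε, 1) (-ε, -1) := rfl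

instance : IsProbabilityMeasure muMart := muMart_eq_twoPoint ▸ inferInstance

instance (ε : ℝ) : IsProbabilityMeasure (muEps ε) := muEps_eq_twoPoint ε ▸ inferInstance

lemma ae_fst_eq_zero_muMart : ∀ᵐ x ∂muMart, x.1 = 0 := by
  simp [muMart_eq_twoPoint, ae_twoPoint_iff]

lemma ae_eq_muEps {ε : ℝ} (hε : ε ≠ 0) : ∀ᵐ y ∂muEps ε, y = (y.1, y.1 / ε) := by
  simp [muEps_eq_twoPoint, ae_twoPoint_iff, hε]

lemma eq_muMart_prod_muEps_of_isBicausal2 {ε : ℝ} (hε : ε ≠ 0)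
    (π : Measure ((ℝ × ℝ) × (ℝ × ℝ))) [IsProbabilityMeasure π]
    (hfst : π.map Prod.fst = muMart) (hsnd : π.map Prod.snd = muEps ε) (h : IsBicausal2 π) :
    π = muMart.prod (muEps ε) := by
  have hx₁ : ∀ᵐ q ∂π, q.1.1 = 0 :=
    ae_of_ae_map measurable_fst.aemeasurable (hfst ▸ ae_fst_eq_zero_muMart)
  have hy : ∀ᵐ q ∂π, q.2 = (q.2.1, q.2.1 / ε) :=
    ae_of_ae_map measurable_snd.aemeasurable (hsnd ▸ ae_eq_muEps hε)
  rw [h.eq_map_fst_prod_map_snd hx₁ (g := fun a => (a, a / ε)) (by fun_prop) hy, hfst, hsnd]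

lemma integral_cost_muMart_prod_muEps {ε p : ℝ} (hε : 0 < ε) (hp : 0 < p) :
    ∫ q : (ℝ × ℝ) × (ℝ × ℝ), (|q.1.1 - q.2.1| ^ p + |q.1.2 - q.2.2| ^ p)
      ∂(muMart.prod (muEps ε)) = ε ^ p + 2 ^ (p - 1) := by
  rw [muMart_eq_twoPoint, muEps_eq_twoPoint, integral_twoPoint_prod_twoPoint]
  norm_num [abs_of_pos hε, Real.zero_rpow hp.ne', Real.rpow_sub_one]
  ring

lemma exists_coupling_integral_cost_eq {ε p : ℝ} (hε : 0 < ε) (hp : 0 < p) :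
    ∃ π : Measure ((ℝ × ℝ) × (ℝ × ℝ)), IsProbabilityMeasure π ∧
      π.map Prod.fst = muMart ∧ π.map Prod.snd = muEps ε ∧
      ∫ q : (ℝ × ℝ) × (ℝ × ℝ), (|q.1.1 - q.2.1| ^ p + |q.1.2 - q.2.2| ^ p) ∂π = ε ^ p := by
  refine ⟨twoPoint ((0, 1), (ε, 1)) ((0, -1), (-ε, -1)), inferInstance,
    map_twoPoint measurable_fst _ _, map_twoPoint measurable_snd _ _, ?_⟩
  rw [integral_twoPoint]
  norm_num [abs_of_pos hε, Real.zero_rpow hp.ne']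

/-- (a) the only bicausal coupling between `μ` and `μ^ε` is the product
coupling `μ ⊗ μ^ε`; (b) consequently `AW_p^p(μ^ε, μ) = ε^p + 2^{p-1}`, so in particular
it exceeds `2^{p-1}`, even though the (non-adapted) `p`-Wasserstein distance between
`μ^ε` and `μ` is at most `ε` (its `p`-th power is at most `ε^p`). -/
theorem stmt_16 (ε p : ℝ) (hε : 0 < ε) (hp : 1 ≤ p) :
    (∀ π : Measure ((ℝ × ℝ) × (ℝ × ℝ)), IsProbabilityMeasure π →
      π.map Prod.fst = muMart → π.map Prod.snd = muEps ε → IsBicausal2 π →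
      π = muMart.prod (muEps ε)) ∧
    sInf {x : ℝ | ∃ π : Measure ((ℝ × ℝ) × (ℝ × ℝ)), IsProbabilityMeasure π ∧
        π.map Prod.fst = muMart ∧ π.map Prod.snd = muEps ε ∧ IsBicausal2 π ∧
        x = ∫ q : (ℝ × ℝ) × (ℝ × ℝ), (|q.1.1 - q.2.1| ^ p + |q.1.2 - q.2.2| ^ p) ∂π}
      = ε ^ p + 2 ^ (p - 1) ∧
    (2 : ℝ) ^ (p - 1) < ε ^ p + 2 ^ (p - 1) ∧
    sInf {x : ℝ | ∃ π : Measure ((ℝ × ℝ) × (ℝ × ℝ)), IsProbabilityMeasure π ∧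
        π.map Prod.fst = muMart ∧ π.map Prod.snd = muEps ε ∧
        x = ∫ q : (ℝ × ℝ) × (ℝ × ℝ), (|q.1.1 - q.2.1| ^ p + |q.1.2 - q.2.2| ^ p) ∂π}
      ≤ ε ^ p := by
  have hp₀ : 0 < p := by linarith
  have hunique := fun π (_ : IsProbabilityMeasure π) =>
    eq_muMart_prod_muEps_of_isBicausal2 hε.ne' π
  have hcost := integral_cost_muMart_prod_muEps hε hp₀
  refine ⟨hunique, ?_, lt_add_of_pos_left _ (Real.rpow_pos_of_pos hε p), ?_⟩
  · refine (congrArg sInf (Set.ext fun x => ?_)).trans (csInf_singleton _)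
    constructor
    · rintro ⟨π, hπ, hfst, hsnd, hbc, rfl⟩
      rw [hunique π hπ hfst hsnd hbc, hcost, Set.mem_singleton_iff]
    · rintro rfl
      exact ⟨_, inferInstance, by simp, by simp, isBicausal2_prod _ _ ae_fst_eq_zero_muMart,
        hcost.symm⟩
  · obtain ⟨π, hπ, hfst, hsnd, hπcost⟩ := exists_coupling_integral_cost_eq hε hp₀
    refine csInf_le ⟨0, ?_⟩ ⟨π, hπ, hfst, hsnd, hπcost.symm⟩
    rintro _ ⟨π, -, -, -, rfl⟩
    exact integral_nonneg fun q => by positivity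

end
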